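/- arXiv:2112.14087 — 2 statements merged into one kernel-verified Lean document; each statement's English description precedes it below -/
import Mathlib

section
/- (Theorem 1, explicit attention form.) Define the self-attention output Attn(q,k,v) = v · σ((qᵀk)/√d) ∈ ℝ^{d×p}, where σ is the column-wise softmax on ℝ^{p×p}, i.e., σ(S)_{ij} = exp(S_{ij}) / Σ_{m} exp(S_{mj}). For any projection matrix W ∈ ℝ^{d₀×d} and any Fréchet differentiable f : ℝ^{d₀×p} → ℝ, set L(Q,K,V,z) = f(W · Attn(Qz, Kz, Vz)). Then L is differentiable in (Q,K,V,z) and its gradient matrices satisfy (∇_z L) zᵀ = Qᵀ(∇_Q L) + Kᵀ(∇_K L) + Vᵀ(∇_V L). -/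
/-!
STATEMENT 3 (Theorem 1, explicit attention form).
`Attn q k v = v * σ((qᵀ k)/√d)` with column-wise softmax `σ`; for a projection
`W` and differentiable `f`, `L(Q,K,V,z) = f (W * Attn (Qz) (Kz) (Vz))` is
differentiable in `(Q,K,V,z)` and its gradient matrices satisfy
`(∇_z L) zᵀ = Qᵀ (∇_Q L) + Kᵀ (∇_K L) + Vᵀ (∇_V L)`.
-/

open Matrix

attribute [local instance] Matrix.normedAddCommGroup Matrix.normedSpace

noncomputable section

/-- `G` is the gradient matrix of the scalar function `F` at `X`:
it represents the Fréchet derivative of `F` at `X` via the Frobenius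
inner product, `(dF)(H) = trace (Gᵀ * H)`. -/
def HasGradientMatrixAt {α β : Type*} [Fintype α] [Fintype β]
    (F : Matrix α β ℝ → ℝ) (G : Matrix α β ℝ) (X : Matrix α β ℝ) : Prop :=
  ∃ D : Matrix α β ℝ →L[ℝ] ℝ, HasFDerivAt F D X ∧ ∀ H, D H = Matrix.trace (Gᵀ * H)

/-- Column-wise softmax on `p × p` matrices:
`σ(S)_{ij} = exp S_{ij} / ∑_m exp S_{mj}`. -/
def softmaxCols {p : ℕ} (S : Matrix (Fin p) (Fin p) ℝ) : Matrix (Fin p) (Fin p) ℝ :=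
  Matrix.of fun i j => Real.exp (S i j) / ∑ m, Real.exp (S m j)

/-- Self-attention output `Attn(q,k,v) = v * σ((qᵀ k)/√d)`. -/
def Attn {d p : ℕ} (q k v : Matrix (Fin d) (Fin p) ℝ) : Matrix (Fin d) (Fin p) ℝ :=
  v * softmaxCols ((Real.sqrt d)⁻¹ • (qᵀ * k))

/-!
Write the loss as `g (Q z, K z, V z)` with `g` differentiable, and let `G₁, G₂, G₃` be the gradient
matrices of `g` in its three arguments. Since `trace (Gᵀ (H z)) = trace ((G zᵀ)ᵀ H)` and
`trace (Gᵀ (Q H)) = trace ((Qᵀ G)ᵀ H)`, the chain rule gives `∇_Q L = G₁ zᵀ` (likewise for `K`, `V`)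
and `∇_z L = Qᵀ G₁ + Kᵀ G₂ + Vᵀ G₃`; multiplying the latter by `zᵀ` on the right yields the identity
by associativity. Attention enters only through the differentiability of `g`.
-/

section MatrixCalculus

variable {𝕜 : Type*} [NontriviallyNormedField 𝕜]
  {E : Type*} [NormedAddCommGroup E] [NormedSpace 𝕜 E]
  {l m n : Type*} [Fintype l] [Fintype m] [Fintype n]

theorem differentiable_matrix_apply (i : m) (j : n) :
    Differentiable 𝕜 fun A : Matrix m n 𝕜 => A i j :=
  differentiable_pi.1 (differentiable_pi.1 differentiable_id i) j

variable [CompleteSpace 𝕜]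

@[fun_prop]
theorem Differentiable.matrix_mul {A : E → Matrix l m 𝕜} {B : E → Matrix m n 𝕜}
    (hA : Differentiable 𝕜 A) (hB : Differentiable 𝕜 B) :
    Differentiable 𝕜 fun x => A x * B x := by
  let b : Matrix l m 𝕜 →L[𝕜] Matrix m n 𝕜 →L[𝕜] Matrix l n 𝕜 :=
    (LinearMap.toContinuousLinearMap.toLinearMap ∘ₗ mulLinearMap 𝕜).toContinuousLinearMap
  exact b.isBoundedBilinearMap.differentiable.comp (hA.prodMk hB)

@[fun_prop]
theorem Differentiable.matrix_transpose {A : E → Matrix m n 𝕜} (hA : Differentiable 𝕜 A) :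
    Differentiable 𝕜 fun x => (A x)ᵀ :=
  (transposeLinearEquiv m n 𝕜 𝕜).toLinearMap.toContinuousLinearMap.differentiable.comp hA

def Matrix.mulRightCLM (z : Matrix m n 𝕜) : Matrix l m 𝕜 →L[𝕜] Matrix l n 𝕜 :=
  (mulRightLinearMap l 𝕜 z).toContinuousLinearMap

def Matrix.mulLeftCLM (Q : Matrix l m 𝕜) : Matrix m n 𝕜 →L[𝕜] Matrix l n 𝕜 :=
  (mulLeftLinearMap n 𝕜 Q).toContinuousLinearMap

end MatrixCalculus

section Attention

variable {E : Type*} [NormedAddCommGroup E] [NormedSpace ℝ E]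

@[fun_prop]
theorem differentiable_softmaxCols {p : ℕ} :
    Differentiable ℝ (softmaxCols : Matrix (Fin p) (Fin p) ℝ → _) := by
  refine differentiable_pi.2 fun i => differentiable_pi.2 fun j => ?_
  have hsum_pos (S : Matrix (Fin p) (Fin p) ℝ) : 0 < ∑ m, Real.exp (S m j) :=
    Finset.sum_pos (fun m _ => Real.exp_pos _) ⟨i, Finset.mem_univ i⟩
  simp only [softmaxCols, of_apply, div_eq_mul_inv]
  exact (differentiable_matrix_apply i j).exp.mul
    ((Differentiable.fun_sum fun m _ => (differentiable_matrix_apply m j).exp).inv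
      fun S => (hsum_pos S).ne')

@[fun_prop]
theorem Differentiable.attn {d p : ℕ} {q k v : E → Matrix (Fin d) (Fin p) ℝ}
    (hq : Differentiable ℝ q) (hk : Differentiable ℝ k) (hv : Differentiable ℝ v) :
    Differentiable ℝ fun x => Attn (q x) (k x) (v x) := by
  unfold Attn
  fun_prop

end Attention

section TraceForm

variable {R : Type*} [CommSemiring R] {l m n : Type*} [Fintype l] [Fintype m] [Fintype n]

theorem trace_transpose_mul_mul_right (G : Matrix l n R) (H : Matrix l m R) (z : Matrix m n R) :
    trace (Gᵀ * (H * z)) = trace ((G * zᵀ)ᵀ * H) := by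
  rw [transpose_mul, transpose_transpose, ← Matrix.mul_assoc, trace_mul_cycle]

theorem trace_transpose_mul_mul_left (G : Matrix l n R) (Q : Matrix l m R) (H : Matrix m n R) :
    trace (Gᵀ * (Q * H)) = trace ((Qᵀ * G)ᵀ * H) := by
  rw [transpose_mul, transpose_transpose, Matrix.mul_assoc]

theorem exists_trace_transpose_mul_eq [DecidableEq m] [DecidableEq n] (D : Matrix m n R →ₗ[R] R) :
    ∃ G : Matrix m n R, ∀ H, D H = trace (Gᵀ * H) := by
  refine ⟨of fun i j => D (single i j 1), fun H => ?_⟩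
  conv_lhs => rw [matrix_eq_sum_single H]
  simp only [map_sum, trace, diag, mul_apply, transpose_apply, of_apply]
  rw [Finset.sum_comm]
  refine Finset.sum_congr rfl fun i _ => Finset.sum_congr rfl fun j _ => ?_
  rw [mul_comm, ← smul_eq_mul, ← map_smul, smul_single, smul_eq_mul, mul_one]

variable {ι₁ ι₂ ι₃ : Type*} [Fintype ι₁] [Fintype ι₂] [Fintype ι₃]
  [DecidableEq ι₁] [DecidableEq ι₂] [DecidableEq ι₃] [DecidableEq n]

theorem exists_trace_transpose_mul_eq_prod
    (D : Matrix ι₁ n R × Matrix ι₂ n R × Matrix ι₃ n R →ₗ[R] R) :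
    ∃ (G₁ : Matrix ι₁ n R) (G₂ : Matrix ι₂ n R) (G₃ : Matrix ι₃ n R), ∀ A B C,
      D (A, B, C) = trace (G₁ᵀ * A) + trace (G₂ᵀ * B) + trace (G₃ᵀ * C) := by
  obtain ⟨G₁, h₁⟩ := exists_trace_transpose_mul_eq (D ∘ₗ .inl R _ _)
  obtain ⟨G₂, h₂⟩ := exists_trace_transpose_mul_eq (D ∘ₗ .inr R _ _ ∘ₗ .inl R _ _)
  obtain ⟨G₃, h₃⟩ := exists_trace_transpose_mul_eq (D ∘ₗ .inr R _ _ ∘ₗ .inr R _ _)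
  refine ⟨G₁, G₂, G₃, fun A B C => ?_⟩
  have hsplit : ((A, B, C) : Matrix ι₁ n R × Matrix ι₂ n R × Matrix ι₃ n R) =
      (A, 0, 0) + (0, B, 0) + (0, 0, C) := by simp
  rw [hsplit, map_add, map_add, ← h₁, ← h₂, ← h₃]
  rfl

end TraceForm

section ChainRule

variable {ι₁ ι₂ ι₃ κ ν : Type*} [Fintype ι₁] [Fintype ι₂] [Fintype ι₃] [Fintype κ] [Fintype ν]
  [DecidableEq ι₁] [DecidableEq ι₂] [DecidableEq ι₃] [DecidableEq ν]

theorem exists_gradients_comp_mul {g : Matrix ι₁ ν ℝ × Matrix ι₂ ν ℝ × Matrix ι₃ ν ℝ → ℝ}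
    {Q : Matrix ι₁ κ ℝ} {K : Matrix ι₂ κ ℝ} {V : Matrix ι₃ κ ℝ} {z : Matrix κ ν ℝ}
    (hg : DifferentiableAt ℝ g (Q * z, K * z, V * z)) :
    ∃ (GQ : Matrix ι₁ κ ℝ) (GK : Matrix ι₂ κ ℝ) (GV : Matrix ι₃ κ ℝ) (Gz : Matrix κ ν ℝ),
      HasGradientMatrixAt (fun Q' => g (Q' * z, K * z, V * z)) GQ Q ∧
      HasGradientMatrixAt (fun K' => g (Q * z, K' * z, V * z)) GK K ∧
      HasGradientMatrixAt (fun V' => g (Q * z, K * z, V' * z)) GV V ∧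
      HasGradientMatrixAt (fun z' => g (Q * z', K * z', V * z')) Gz z ∧
      Gz * zᵀ = Qᵀ * GQ + Kᵀ * GK + Vᵀ * GV := by
  have hD := hg.hasFDerivAt
  obtain ⟨G₁, G₂, G₃, hG⟩ :=
    exists_trace_transpose_mul_eq_prod (fderiv ℝ g (Q * z, K * z, V * z)).toLinearMap
  refine ⟨G₁ * zᵀ, G₂ * zᵀ, G₃ * zᵀ, Qᵀ * G₁ + Kᵀ * G₂ + Vᵀ * G₃, ?_, ?_, ?_, ?_, ?_⟩
  · refine ⟨_, hD.comp Q ((mulRightCLM z).hasFDerivAt.prodMk (hasFDerivAt_const _ _)),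
      fun H => (hG (H * z) 0 0).trans ?_⟩
    simp only [Matrix.mul_zero, trace_zero, add_zero, trace_transpose_mul_mul_right]
  · refine ⟨_, hD.comp K ((hasFDerivAt_const _ _).prodMk
      ((mulRightCLM z).hasFDerivAt.prodMk (hasFDerivAt_const _ _))),
      fun H => (hG 0 (H * z) 0).trans ?_⟩
    simp only [Matrix.mul_zero, trace_zero, add_zero, zero_add, trace_transpose_mul_mul_right]
  · refine ⟨_, hD.comp V ((hasFDerivAt_const _ _).prodMk
      ((hasFDerivAt_const _ _).prodMk (mulRightCLM z).hasFDerivAt)),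
      fun H => (hG 0 0 (H * z)).trans ?_⟩
    simp only [Matrix.mul_zero, trace_zero, zero_add, trace_transpose_mul_mul_right]
  · refine ⟨_, hD.comp z ((mulLeftCLM Q).hasFDerivAt.prodMk
      ((mulLeftCLM K).hasFDerivAt.prodMk (mulLeftCLM V).hasFDerivAt)),
      fun H => (hG (Q * H) (K * H) (V * H)).trans ?_⟩
    simp only [trace_transpose_mul_mul_left, transpose_add, Matrix.add_mul, trace_add]
  · simp only [Matrix.add_mul, Matrix.mul_assoc]

end ChainRule

theorem april_identity_attention_general {p c d d₀ : ℕ}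
    (W : Matrix (Fin d₀) (Fin d) ℝ)
    (f : Matrix (Fin d₀) (Fin p) ℝ → ℝ) (hf : Differentiable ℝ f) :
    Differentiable ℝ
      (fun x : Matrix (Fin d) (Fin c) ℝ × Matrix (Fin d) (Fin c) ℝ ×
               Matrix (Fin d) (Fin c) ℝ × Matrix (Fin c) (Fin p) ℝ =>
        f (W * Attn (x.1 * x.2.2.2) (x.2.1 * x.2.2.2) (x.2.2.1 * x.2.2.2))) ∧
    ∀ (Q K V : Matrix (Fin d) (Fin c) ℝ) (z : Matrix (Fin c) (Fin p) ℝ),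
      ∃ (GQ GK GV : Matrix (Fin d) (Fin c) ℝ) (Gz : Matrix (Fin c) (Fin p) ℝ),
        HasGradientMatrixAt (fun Q' => f (W * Attn (Q' * z) (K * z) (V * z))) GQ Q ∧
        HasGradientMatrixAt (fun K' => f (W * Attn (Q * z) (K' * z) (V * z))) GK K ∧
        HasGradientMatrixAt (fun V' => f (W * Attn (Q * z) (K * z) (V' * z))) GV V ∧
        HasGradientMatrixAt (fun z' => f (W * Attn (Q * z') (K * z') (V * z'))) Gz z ∧
        Gz * zᵀ = Qᵀ * GQ + Kᵀ * GK + Vᵀ * GV :=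
  ⟨by fun_prop, fun _ _ _ _ =>
    exists_gradients_comp_mul (g := fun x => f (W * Attn x.1 x.2.1 x.2.2)) (by fun_prop)⟩

theorem april_identity_attention {p c d d₀ : ℕ}
    (hp : 0 < p) (hc : 0 < c) (hd : 0 < d) (hd₀ : 0 < d₀)
    (W : Matrix (Fin d₀) (Fin d) ℝ)
    (f : Matrix (Fin d₀) (Fin p) ℝ → ℝ) (hf : Differentiable ℝ f) :
    Differentiable ℝ
      (fun x : Matrix (Fin d) (Fin c) ℝ × Matrix (Fin d) (Fin c) ℝ ×
               Matrix (Fin d) (Fin c) ℝ × Matrix (Fin c) (Fin p) ℝ =>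
        f (W * Attn (x.1 * x.2.2.2) (x.2.1 * x.2.2.2) (x.2.2.1 * x.2.2.2))) ∧
    ∀ (Q K V : Matrix (Fin d) (Fin c) ℝ) (z : Matrix (Fin c) (Fin p) ℝ),
      ∃ (GQ GK GV : Matrix (Fin d) (Fin c) ℝ) (Gz : Matrix (Fin c) (Fin p) ℝ),
        HasGradientMatrixAt (fun Q' => f (W * Attn (Q' * z) (K * z) (V * z))) GQ Q ∧
        HasGradientMatrixAt (fun K' => f (W * Attn (Q * z) (K' * z) (V * z))) GK K ∧
        HasGradientMatrixAt (fun V' => f (W * Attn (Q * z) (K * z) (V' * z))) GV V ∧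
        HasGradientMatrixAt (fun z' => f (W * Attn (Q * z') (K * z') (V * z'))) Gz z ∧
        Gz * zᵀ = Qᵀ * GQ + Kᵀ * GK + Vᵀ * GV :=
  april_identity_attention_general W f hf
end
end

section
/- (Theorem 1, uniqueness of recovery.) Let L(Q,K,V,z) = g(Qz, Kz, Vz) be the self-attention loss and let M := ∇_z L ∈ ℝ^{c×p} be its gradient matrix with respect to z, and B := Qᵀ(∇_Q L) + Kᵀ(∇_K L) + Vᵀ(∇_V L) ∈ ℝ^{c×c}. If M has full column rank p, then zᵀ is the unique matrix X ∈ ℝ^{p×c} satisfying M X = B; moreover MᵀM is invertible and zᵀ = (MᵀM)⁻¹ Mᵀ B. -/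
/-!
By the chain rule, `∇_z L = Qᵀ G_q + Kᵀ G_k + Vᵀ G_v` and `∇_Q L = G_q zᵀ` (likewise for `K`, `V`),
where `(G_q, G_k, G_v)` is the gradient of `g` at `(Qz, Kz, Vz)`. Hence `B = M zᵀ`. Full column
rank makes `MᵀM` invertible (it has the rank of `M`), so `(MᵀM)⁻¹Mᵀ` is a left inverse of `M`
and `zᵀ` is the only solution of `M X = B`.
-/

open Matrix

attribute [local instance] Matrix.normedAddCommGroup Matrix.normedSpace

noncomputable section

/-- `(Gq, Gk, Gv)` are the gradient matrices of `g` with respect to its three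
matrix arguments at the point `x = (q, k, v)`, i.e. they represent the Fréchet
derivative of `g` at `x` via the Frobenius inner product. -/
def HasGradientTripleAt {d p : ℕ}
    (g : Matrix (Fin d) (Fin p) ℝ × Matrix (Fin d) (Fin p) ℝ × Matrix (Fin d) (Fin p) ℝ → ℝ)
    (Gq Gk Gv : Matrix (Fin d) (Fin p) ℝ)
    (x : Matrix (Fin d) (Fin p) ℝ × Matrix (Fin d) (Fin p) ℝ × Matrix (Fin d) (Fin p) ℝ) :
    Prop :=
  ∃ D : (Matrix (Fin d) (Fin p) ℝ × Matrix (Fin d) (Fin p) ℝ × Matrix (Fin d) (Fin p) ℝ) →L[ℝ] ℝ,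
    HasFDerivAt g D x ∧
    ∀ Hq Hk Hv, D (Hq, Hk, Hv) =
      Matrix.trace (Gqᵀ * Hq) + Matrix.trace (Gkᵀ * Hk) + Matrix.trace (Gvᵀ * Hv)


namespace Matrix

variable {m n o K : Type*} [Fintype m] [Fintype n] [DecidableEq n]

theorem isUnit_of_rank_eq_card [Field K] {A : Matrix n n K} (h : A.rank = Fintype.card n) :
    IsUnit A := by
  rw [← mulVec_surjective_iff_isUnit, ← coe_mulVecLin, ← LinearMap.range_eq_top]
  exact Submodule.eq_top_of_finrank_eq (by rw [Module.finrank_fintype_fun_eq_card]; exact h)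

theorem isUnit_transpose_mul_self_of_rank_eq_card [Field K] [LinearOrder K] [IsStrictOrderedRing K]
    {A : Matrix m n K} (h : A.rank = Fintype.card n) : IsUnit (Aᵀ * A) :=
  isUnit_of_rank_eq_card (by rw [rank_transpose_mul_self, h])

theorem inv_transpose_mul_self_mul_transpose_mul_cancel [CommRing K] {A : Matrix m n K}
    (hA : IsUnit (Aᵀ * A)) (X : Matrix n o K) : (Aᵀ * A)⁻¹ * Aᵀ * (A * X) = X := by
  rw [Matrix.mul_assoc, ← Matrix.mul_assoc Aᵀ, ← Matrix.mul_assoc,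
    nonsing_inv_mul _ ((isUnit_iff_isUnit_det _).mp hA), Matrix.one_mul]

end Matrix

namespace HasGradientMatrixAt

variable {α β γ : Type*} [Fintype α] [Fintype β] [Fintype γ]

theorem unique {F : Matrix α β ℝ → ℝ} {G G' X : Matrix α β ℝ} (h : HasGradientMatrixAt F G X)
    (h' : HasGradientMatrixAt F G' X) : G = G' := by
  obtain ⟨D, hD, hDG⟩ := h
  obtain ⟨D', hD', hDG'⟩ := h'
  exact transpose_injective <| ext_iff_trace_mul_right.2 fun H => by
    rw [← hDG, ← hDG', hD.unique hD']

theorem comp_mul_right {F : Matrix α γ ℝ → ℝ} {G : Matrix α γ ℝ} {X : Matrix α β ℝ}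
    {z : Matrix β γ ℝ} (h : HasGradientMatrixAt F G (X * z)) :
    HasGradientMatrixAt (fun X' => F (X' * z)) (G * zᵀ) X := by
  obtain ⟨D, hD, hDG⟩ := h
  let R := (mulRightLinearMap α ℝ z).toContinuousLinearMap
  refine ⟨D.comp R, hD.comp X R.hasFDerivAt, fun H => ?_⟩
  change D (H * z) = _
  rw [hDG, transpose_mul, transpose_transpose, Matrix.mul_assoc, trace_mul_comm z, Matrix.mul_assoc]

end HasGradientMatrixAt

namespace HasGradientTripleAt

variable {c d p : ℕ}
  {g : Matrix (Fin d) (Fin p) ℝ × Matrix (Fin d) (Fin p) ℝ × Matrix (Fin d) (Fin p) ℝ → ℝ}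
  {Gq Gk Gv q k v : Matrix (Fin d) (Fin p) ℝ}

theorem hasGradientMatrixAt_fst (h : HasGradientTripleAt g Gq Gk Gv (q, k, v)) :
    HasGradientMatrixAt (fun q' => g (q', k, v)) Gq q := by
  obtain ⟨D, hD, hDG⟩ := h
  refine ⟨_, hD.comp q ((hasFDerivAt_id q).prodMk (hasFDerivAt_const (k, v) q)), fun H => ?_⟩
  change D (H, 0, 0) = _
  simpa using hDG H 0 0

theorem hasGradientMatrixAt_snd (h : HasGradientTripleAt g Gq Gk Gv (q, k, v)) :
    HasGradientMatrixAt (fun k' => g (q, k', v)) Gk k := by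
  obtain ⟨D, hD, hDG⟩ := h
  refine ⟨_, hD.comp k ((hasFDerivAt_const q k).prodMk
    ((hasFDerivAt_id k).prodMk (hasFDerivAt_const v k))), fun H => ?_⟩
  change D (0, H, 0) = _
  simpa using hDG 0 H 0

theorem hasGradientMatrixAt_thd (h : HasGradientTripleAt g Gq Gk Gv (q, k, v)) :
    HasGradientMatrixAt (fun v' => g (q, k, v')) Gv v := by
  obtain ⟨D, hD, hDG⟩ := h
  refine ⟨_, hD.comp v ((hasFDerivAt_const q v).prodMk
    ((hasFDerivAt_const k v).prodMk (hasFDerivAt_id v))), fun H => ?_⟩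
  change D (0, 0, H) = _
  simpa using hDG 0 0 H

theorem hasGradientMatrixAt_comp_mul_left {Q K V : Matrix (Fin d) (Fin c) ℝ}
    {z : Matrix (Fin c) (Fin p) ℝ} (h : HasGradientTripleAt g Gq Gk Gv (Q * z, K * z, V * z)) :
    HasGradientMatrixAt (fun z' => g (Q * z', K * z', V * z')) (Qᵀ * Gq + Kᵀ * Gk + Vᵀ * Gv) z := by
  obtain ⟨D, hD, hDG⟩ := h
  let L (A : Matrix (Fin d) (Fin c) ℝ) := (mulLeftLinearMap (Fin p) ℝ A).toContinuousLinearMap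
  let J := (L Q).prod ((L K).prod (L V))
  refine ⟨D.comp J, hD.comp z J.hasFDerivAt, fun H => ?_⟩
  change D (Q * H, K * H, V * H) = _
  simp only [hDG, transpose_add, transpose_mul, transpose_transpose, Matrix.add_mul, trace_add,
    Matrix.mul_assoc]

end HasGradientTripleAt

theorem april_unique_recovery_general {p c d : ℕ}
    (g : Matrix (Fin d) (Fin p) ℝ × Matrix (Fin d) (Fin p) ℝ × Matrix (Fin d) (Fin p) ℝ → ℝ)
    (Q K V : Matrix (Fin d) (Fin c) ℝ) (z : Matrix (Fin c) (Fin p) ℝ)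
    (Gq Gk Gv : Matrix (Fin d) (Fin p) ℝ)
    (hgrad : HasGradientTripleAt g Gq Gk Gv (Q * z, K * z, V * z))
    (M : Matrix (Fin c) (Fin p) ℝ) (GQ GK GV : Matrix (Fin d) (Fin c) ℝ)
    (hM : HasGradientMatrixAt (fun z' => g (Q * z', K * z', V * z')) M z)
    (hGQ : HasGradientMatrixAt (fun Q' => g (Q' * z, K * z, V * z)) GQ Q)
    (hGK : HasGradientMatrixAt (fun K' => g (Q * z, K' * z, V * z)) GK K)
    (hGV : HasGradientMatrixAt (fun V' => g (Q * z, K * z, V' * z)) GV V)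
    (hrank : M.rank = p) :
    IsUnit (Mᵀ * M) ∧
    (∀ X : Matrix (Fin p) (Fin c) ℝ,
        M * X = Qᵀ * GQ + Kᵀ * GK + Vᵀ * GV ↔ X = zᵀ) ∧
    zᵀ = (Mᵀ * M)⁻¹ * Mᵀ * (Qᵀ * GQ + Kᵀ * GK + Vᵀ * GV) := by
  have hB : Qᵀ * GQ + Kᵀ * GK + Vᵀ * GV = M * zᵀ := by
    rw [hM.unique hgrad.hasGradientMatrixAt_comp_mul_left,
      hGQ.unique hgrad.hasGradientMatrixAt_fst.comp_mul_right,
      hGK.unique hgrad.hasGradientMatrixAt_snd.comp_mul_right,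
      hGV.unique hgrad.hasGradientMatrixAt_thd.comp_mul_right]
    simp only [Matrix.add_mul, Matrix.mul_assoc]
  have hMM : IsUnit (Mᵀ * M) :=
    isUnit_transpose_mul_self_of_rank_eq_card (by rw [hrank, Fintype.card_fin])
  have hcancel (X : Matrix (Fin p) (Fin c) ℝ) := inv_transpose_mul_self_mul_transpose_mul_cancel hMM X
  refine ⟨hMM, fun X => ⟨fun hX => ?_, fun hX => hX ▸ hB.symm⟩, by rw [hB, hcancel]⟩
  rw [← hcancel X, hX, hB, hcancel]

theorem april_unique_recovery {p c d : ℕ} (hp : 0 < p) (hc : 0 < c) (hd : 0 < d)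
    (g : Matrix (Fin d) (Fin p) ℝ × Matrix (Fin d) (Fin p) ℝ × Matrix (Fin d) (Fin p) ℝ → ℝ)
    (hg : Differentiable ℝ g)
    (Q K V : Matrix (Fin d) (Fin c) ℝ) (z : Matrix (Fin c) (Fin p) ℝ)
    (Gq Gk Gv : Matrix (Fin d) (Fin p) ℝ)
    (hgrad : HasGradientTripleAt g Gq Gk Gv (Q * z, K * z, V * z))
    (M : Matrix (Fin c) (Fin p) ℝ) (GQ GK GV : Matrix (Fin d) (Fin c) ℝ)
    (hM : HasGradientMatrixAt (fun z' => g (Q * z', K * z', V * z')) M z)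
    (hGQ : HasGradientMatrixAt (fun Q' => g (Q' * z, K * z, V * z)) GQ Q)
    (hGK : HasGradientMatrixAt (fun K' => g (Q * z, K' * z, V * z)) GK K)
    (hGV : HasGradientMatrixAt (fun V' => g (Q * z, K * z, V' * z)) GV V)
    (hrank : M.rank = p) :
    IsUnit (Mᵀ * M) ∧
    (∀ X : Matrix (Fin p) (Fin c) ℝ,
        M * X = Qᵀ * GQ + Kᵀ * GK + Vᵀ * GV ↔ X = zᵀ) ∧
    zᵀ = (Mᵀ * M)⁻¹ * Mᵀ * (Qᵀ * GQ + Kᵀ * GK + Vᵀ * GV) :=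
  april_unique_recovery_general g Q K V z Gq Gk Gv hgrad M GQ GK GV hM hGQ hGK hGV hrank
end
end
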